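/- arXiv:1908.04044 — 5 statements merged into one kernel-verified Lean document; each statement's English description precedes it below -/
import Mathlib

section
/- The two groupoid multiplications on Γ satisfy the interchange law of a double groupoid: whenever γ₁,γ₂,γ₃,γ₄ ∈ Γ are such that γ₁ ⋆ γ₂, γ₃ ⋆ γ₄, γ₁·γ₃ and γ₂·γ₄ are all defined, then (γ₁ ⋆ γ₂)·(γ₃ ⋆ γ₄) and (γ₁·γ₃) ⋆ (γ₂·γ₄) are both defined and are equal. -/
theorem gamma_interchange_law_general
    {D : Type*} [Group D]
    (Γ : Set (D × D × D × D))
    (star dot : D × D × D × D → D × D × D × D → D × D × D × D)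
    (hstar : ∀ p q, star p q = (q.1 * p.1, p.2.1, q.2.2.1, q.2.2.2 * p.2.2.2))
    (hdot : ∀ p q, dot p q = (p.1, p.2.1 * q.2.1, p.2.2.1 * q.2.2.1, q.2.2.2)) :
    ∀ γ₁ ∈ Γ, ∀ γ₂ ∈ Γ, ∀ γ₃ ∈ Γ, ∀ γ₄ ∈ Γ,
      γ₁.2.2.1 = γ₂.2.1 →      -- γ₁ ⋆ γ₂ defined
      γ₃.2.2.1 = γ₄.2.1 →      -- γ₃ ⋆ γ₄ defined
      γ₁.2.2.2 = γ₃.1 →        -- γ₁ · γ₃ defined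
      γ₂.2.2.2 = γ₄.1 →        -- γ₂ · γ₄ defined
      (star γ₁ γ₂).2.2.2 = (star γ₃ γ₄).1 ∧        -- (γ₁⋆γ₂)·(γ₃⋆γ₄) defined
      (dot γ₁ γ₃).2.2.1 = (dot γ₂ γ₄).2.1 ∧        -- (γ₁·γ₃)⋆(γ₂·γ₄) defined
      dot (star γ₁ γ₂) (star γ₃ γ₄) = star (dot γ₁ γ₃) (dot γ₂ γ₄) := by
  intro γ₁ _ γ₂ _ γ₃ _ γ₄ _ h12 h34 h13 h24
  exact ⟨by simp [hstar, h13, h24], by simp [hdot, h12, h34],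
    by simp [hstar, hdot, h12, h34]⟩

/-- the two groupoid multiplications on Γ satisfy the double-groupoid
interchange law: if γ₁ ⋆ γ₂, γ₃ ⋆ γ₄, γ₁·γ₃ and γ₂·γ₄ are defined, then
(γ₁ ⋆ γ₂)·(γ₃ ⋆ γ₄) and (γ₁·γ₃) ⋆ (γ₂·γ₄) are defined and equal. -/
theorem gamma_interchange_law
    {D : Type*} [Group D] (G Gs : Subgroup D)
    (Γ : Set (D × D × D × D))
    (hΓ : Γ = {p | p.1 ∈ G ∧ p.2.1 ∈ Gs ∧ p.2.2.1 ∈ Gs ∧ p.2.2.2 ∈ G ∧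
      p.1 * p.2.1 = p.2.2.1 * p.2.2.2})
    (star dot : D × D × D × D → D × D × D × D → D × D × D × D)
    (hstar : ∀ p q, star p q = (q.1 * p.1, p.2.1, q.2.2.1, q.2.2.2 * p.2.2.2))
    (hdot : ∀ p q, dot p q = (p.1, p.2.1 * q.2.1, p.2.2.1 * q.2.2.1, q.2.2.2)) :
    ∀ γ₁ ∈ Γ, ∀ γ₂ ∈ Γ, ∀ γ₃ ∈ Γ, ∀ γ₄ ∈ Γ,
      γ₁.2.2.1 = γ₂.2.1 →      -- γ₁ ⋆ γ₂ defined
      γ₃.2.2.1 = γ₄.2.1 →      -- γ₃ ⋆ γ₄ defined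
      γ₁.2.2.2 = γ₃.1 →        -- γ₁ · γ₃ defined
      γ₂.2.2.2 = γ₄.1 →        -- γ₂ · γ₄ defined
      (star γ₁ γ₂).2.2.2 = (star γ₃ γ₄).1 ∧        -- (γ₁⋆γ₂)·(γ₃⋆γ₄) defined
      (dot γ₁ γ₃).2.2.1 = (dot γ₂ γ₄).2.1 ∧        -- (γ₁·γ₃)⋆(γ₂·γ₄) defined
      dot (star γ₁ γ₂) (star γ₃ γ₄) = star (dot γ₁ γ₃) (dot γ₂ γ₄) :=
  gamma_interchange_law_general Γ star dot hstar hdot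
end

section
/- For γ = (g,u,u',g') ∈ Γ, the set S_γ = {(hg, u, h[u'], h^{u'}g') : h ∈ G} is contained in Γ, contains γ, and is a global bisection of the groupoid Γ over G: the source map θ_G(g,u,u',g') = g restricts to a bijection S_γ → G, and the target map τ_G(g,u,u',g') = g' restricts to a bijection S_γ → G. -/
/-!
The maps `h ↦ h * g` and `h ↦ h^{u'} * g'` are bijections of `G`: the first trivially, the second
because `h ↦ h^{u'}` is injective (from `h * u' = h[u'] * k` one reads off `h[u']⁻¹ * h = k * u'⁻¹`,
and the factorization `G* · G` is unique) and surjective (factor `k * u'⁻¹ = w * h` in `G* · G`;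
then `h * u' = w⁻¹ * k`, so `h^{u'} = k`). Since `S_γ` is the image of `G` under
`h ↦ (h * g, u, h[u'], h^{u'} * g')`, whose first coordinate is already injective, both projections
restrict to bijections `S_γ → G`.
-/

theorem Subgroup.bijOn_mul_right {D : Type*} [Group D] (H : Subgroup D) {g : D} (hg : g ∈ H) :
    Set.BijOn (· * g) (H : Set D) H :=
  ⟨fun _ hx => H.mul_mem hx hg, (mul_left_injective g).injOn,
    fun a ha => ⟨a * g⁻¹, H.mul_mem ha (H.inv_mem hg), inv_mul_cancel_right a g⟩⟩

section Factorization

variable {D : Type*} [Group D] {G Gs : Subgroup D}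

/-- `c h v = h[v]` and `d h v = h^v`, where `h * v = h[v] * h^v` with `h[v] ∈ G*`, `h^v ∈ G`. -/
def IsFactorization (G Gs : Subgroup D) (c d : D → D → D) : Prop :=
  ∀ h ∈ G, ∀ v ∈ Gs, c h v ∈ Gs ∧ d h v ∈ G ∧ h * v = c h v * d h v

def UniqueFactorization (Gs G : Subgroup D) : Prop :=
  ∀ u₁ u₂ g₁ g₂ : D, u₁ ∈ Gs → u₂ ∈ Gs → g₁ ∈ G → g₂ ∈ G → u₁ * g₁ = u₂ * g₂ → u₁ = u₂ ∧ g₁ = g₂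

variable {c d : D → D → D}

theorem IsFactorization.eq_of_mul_eq (hcd : IsFactorization G Gs c d)
    (huniq : UniqueFactorization Gs G) {h v w k : D} (hh : h ∈ G) (hv : v ∈ Gs) (hw : w ∈ Gs)
    (hk : k ∈ G) (e : h * v = w * k) : c h v = w ∧ d h v = k :=
  let ⟨hc, hd, he⟩ := hcd h hh v hv
  huniq _ _ _ _ hc hw hd hk (he ▸ e)

theorem IsFactorization.one_left (hcd : IsFactorization G Gs c d)
    (huniq : UniqueFactorization Gs G) {v : D} (hv : v ∈ Gs) : c 1 v = v ∧ d 1 v = 1 :=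
  hcd.eq_of_mul_eq huniq G.one_mem hv hv G.one_mem (by rw [one_mul, mul_one])

theorem IsFactorization.injOn_right (hcd : IsFactorization G Gs c d)
    (huniq : UniqueFactorization Gs G) {v : D} (hv : v ∈ Gs) :
    Set.InjOn (fun h => d h v) (G : Set D) := by
  intro h₁ hh₁ h₂ hh₂ e
  have key : ∀ h ∈ G, (c h v)⁻¹ * h = d h v * v⁻¹ := fun h hh => by
    rw [inv_mul_eq_iff_eq_mul, ← mul_assoc, ← (hcd h hh v hv).2.2, mul_inv_cancel_right]
  exact (huniq _ _ _ _ (Gs.inv_mem (hcd h₁ hh₁ v hv).1) (Gs.inv_mem (hcd h₂ hh₂ v hv).1) hh₁ hh₂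
    (by rw [key h₁ hh₁, key h₂ hh₂, show d h₁ v = d h₂ v from e])).2

theorem IsFactorization.surjOn_right (hcd : IsFactorization G Gs c d)
    (huniq : UniqueFactorization Gs G) (hex : ∀ x : D, ∃ u ∈ Gs, ∃ g ∈ G, x = u * g)
    {v : D} (hv : v ∈ Gs) : Set.SurjOn (fun h => d h v) (G : Set D) G := by
  intro k hk
  obtain ⟨w, hw, h, hh, e⟩ := hex (k * v⁻¹)
  refine ⟨h, hh, (hcd.eq_of_mul_eq huniq hh hv (Gs.inv_mem hw) hk ?_).2⟩
  rw [eq_inv_mul_iff_mul_eq, ← mul_assoc, ← e, inv_mul_cancel_right]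

theorem IsFactorization.bijOn_right (hcd : IsFactorization G Gs c d)
    (huniq : UniqueFactorization Gs G) (hex : ∀ x : D, ∃ u ∈ Gs, ∃ g ∈ G, x = u * g)
    {v : D} (hv : v ∈ Gs) : Set.BijOn (fun h => d h v) (G : Set D) G :=
  ⟨fun h hh => (hcd h hh v hv).2.1, hcd.injOn_right huniq hv, hcd.surjOn_right huniq hex hv⟩

end Factorization

theorem bisection_S_gamma_general
    {D : Type*} [Group D] (G Gs : Subgroup D)
    (hex2 : ∀ d : D, ∃ u ∈ Gs, ∃ g ∈ G, d = u * g)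
    (huniq2 : ∀ u₁ u₂ g₁ g₂ : D, u₁ ∈ Gs → u₂ ∈ Gs → g₁ ∈ G → g₂ ∈ G →
      u₁ * g₁ = u₂ * g₂ → u₁ = u₂ ∧ g₁ = g₂)
    -- c h v = h[v] ∈ G*,  d h v = h^v ∈ G, defined by h·v = h[v]·h^v
    (c d : D → D → D)
    (hcd : ∀ h ∈ G, ∀ v ∈ Gs, c h v ∈ Gs ∧ d h v ∈ G ∧ h * v = c h v * d h v)
    (Γ : Set (D × D × D × D))
    (hΓ : Γ = {p | p.1 ∈ G ∧ p.2.1 ∈ Gs ∧ p.2.2.1 ∈ Gs ∧ p.2.2.2 ∈ G ∧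
      p.1 * p.2.1 = p.2.2.1 * p.2.2.2})
    (γ : D × D × D × D) (hγ : γ ∈ Γ)
    (S : Set (D × D × D × D))
    (hS : S = {p | ∃ h ∈ G,
      p = (h * γ.1, γ.2.1, c h γ.2.2.1, d h γ.2.2.1 * γ.2.2.2)}) :
    S ⊆ Γ ∧ γ ∈ S ∧
    Set.BijOn (fun p => p.1) S (G : Set D) ∧
    Set.BijOn (fun p => p.2.2.2) S (G : Set D) := by
  obtain ⟨g, u, u', g'⟩ := γ
  subst hΓ
  obtain ⟨hg, hu, hu', hg', hγ⟩ := hγ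
  let σ : D → D × D × D × D := fun h => (h * g, u, c h u', d h u' * g')
  have hS : S = σ '' G := by
    rw [hS]; ext p; simp only [Set.mem_ofPred_eq, Set.mem_image, SetLike.mem_coe, eq_comm, σ]
  have hσ : Set.InjOn σ G := (G.bijOn_mul_right hg).injOn.of_comp (g := Prod.fst)
  subst hS
  refine ⟨?_, ⟨1, G.one_mem, ?_⟩, (Set.bijOn_comp_iff hσ).1 (G.bijOn_mul_right hg),
    (Set.bijOn_comp_iff hσ).1
      ((G.bijOn_mul_right hg').comp (IsFactorization.bijOn_right hcd huniq2 hex2 hu'))⟩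
  · rintro _ ⟨h, hh, rfl⟩
    obtain ⟨hc, hd, he⟩ := hcd h hh u' hu'
    refine ⟨G.mul_mem hh hg, hu, hc, G.mul_mem hd hg', ?_⟩
    change h * g * u = c h u' * (d h u' * g')
    rw [mul_assoc, hγ, ← mul_assoc, he, mul_assoc]
  · obtain ⟨hc, hd⟩ := IsFactorization.one_left hcd huniq2 hu'
    simp only [σ, one_mul, hc, hd]

/-- for γ = (g,u,u',g') ∈ Γ, the set
S_γ = {(hg, u, h[u'], h^{u'}g') : h ∈ G} is contained in Γ, contains γ, and is a
global bisection of the groupoid Γ over G: the source θ_G(g,u,u',g') = g and the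
target τ_G(g,u,u',g') = g' both restrict to bijections S_γ → G. Here hv = h[v]·h^v
with h[v] ∈ G*, h^v ∈ G, in the complete case. -/
theorem bisection_S_gamma
    {D : Type*} [Group D] (G Gs : Subgroup D)
    (hex1 : ∀ d : D, ∃ g ∈ G, ∃ u ∈ Gs, d = g * u)
    (huniq1 : ∀ g₁ g₂ u₁ u₂ : D, g₁ ∈ G → g₂ ∈ G → u₁ ∈ Gs → u₂ ∈ Gs →
      g₁ * u₁ = g₂ * u₂ → g₁ = g₂ ∧ u₁ = u₂)
    (hex2 : ∀ d : D, ∃ u ∈ Gs, ∃ g ∈ G, d = u * g)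
    (huniq2 : ∀ u₁ u₂ g₁ g₂ : D, u₁ ∈ Gs → u₂ ∈ Gs → g₁ ∈ G → g₂ ∈ G →
      u₁ * g₁ = u₂ * g₂ → u₁ = u₂ ∧ g₁ = g₂)
    -- c h v = h[v] ∈ G*,  d h v = h^v ∈ G, defined by h·v = h[v]·h^v
    (c d : D → D → D)
    (hcd : ∀ h ∈ G, ∀ v ∈ Gs, c h v ∈ Gs ∧ d h v ∈ G ∧ h * v = c h v * d h v)
    (Γ : Set (D × D × D × D))
    (hΓ : Γ = {p | p.1 ∈ G ∧ p.2.1 ∈ Gs ∧ p.2.2.1 ∈ Gs ∧ p.2.2.2 ∈ G ∧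
      p.1 * p.2.1 = p.2.2.1 * p.2.2.2})
    (γ : D × D × D × D) (hγ : γ ∈ Γ)
    (S : Set (D × D × D × D))
    (hS : S = {p | ∃ h ∈ G,
      p = (h * γ.1, γ.2.1, c h γ.2.2.1, d h γ.2.2.1 * γ.2.2.2)}) :
    S ⊆ Γ ∧ γ ∈ S ∧
    Set.BijOn (fun p => p.1) S (G : Set D) ∧
    Set.BijOn (fun p => p.2.2.2) S (G : Set D) :=
  bisection_S_gamma_general G Gs hex2 huniq2 c d hcd Γ hΓ γ hγ S hS
end

section
/- The twisted multiplication on A ⊗ B defined by (a₁ ⊗ b₁)·(a₂ ⊗ b₂) = Σᵢ a₁(Yᵢ · a₂) ⊗ (Xᵢ · b₁)b₂, where R = Σᵢ Xᵢ ⊗ Yᵢ, is associative, and 1_A ⊗ 1_B is a two-sided unit for it. -/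
/-!
Expanding both sides of associativity on pure tensors, the left side involves `Δ` applied to the
first leg `Xᵢ` of `R`, the right side `Δ` applied to the second leg `Yᵢ`. The module-algebra law
turns these coproducts into products of actions, and the identities `(Δ ⊗ id)R = R₁₃R₂₃` and
`(id ⊗ Δ)R = R₁₃R₁₂` then bring both sides to the same triple sum
`∑ a₁(Yᵢa₂)(YₚY_q a₃) ⊗ (XₚXᵢb₁)(X_q b₂)b₃`. The unit laws are the counit identities for `R`.
-/

open TensorProduct

theorem LinearMap.mul'_homTensorHomMap_map {k H A : Type*} [CommSemiring k] [AddCommMonoid H]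
    [Module k H] [Semiring A] [Algebra k A] (f g : H →ₗ[k] A →ₗ[k] A) (t : H ⊗[k] H) (a a' : A) :
    mul' k A (homTensorHomMap (RingHom.id k) A A A A (map f g t) (a ⊗ₜ[k] a')) =
      lift ((mul k A).compl₁₂ (f.flip a) (g.flip a')) t := by
  induction t using TensorProduct.induction_on with
  | zero => simp
  | tmul u v => simp
  | add t t' ht ht' => simp only [map_add, add_apply, ht, ht']

theorem TensorProduct.bilin_assoc_of_tmul {R M N : Type*} [CommSemiring R] [AddCommMonoid M]
    [AddCommMonoid N] [Module R M] [Module R N] (m : M ⊗[R] N →ₗ[R] M ⊗[R] N →ₗ[R] M ⊗[R] N)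
    (h : ∀ (a₁ a₂ a₃ : M) (b₁ b₂ b₃ : N),
      m (m (a₁ ⊗ₜ b₁) (a₂ ⊗ₜ b₂)) (a₃ ⊗ₜ b₃) = m (a₁ ⊗ₜ b₁) (m (a₂ ⊗ₜ b₂) (a₃ ⊗ₜ b₃)))
    (x y z : M ⊗[R] N) : m (m x y) z = m x (m y z) := by
  have : m.compr₂ m = (LinearMap.llcomp R _ _ _ ∘ₗ m).compl₂ m :=
    ext' fun a₁ b₁ => ext' fun a₂ b₂ => ext' fun a₃ b₃ => h a₁ a₂ a₃ b₁ b₂ b₃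
  exact congr($this x y z)

section TwistedMul

variable {k H ι : Type*} [CommSemiring k] [Semiring H] [Bialgebra k H] {s : Finset ι}
  {X Y : ι → H}

theorem sum_act_tmul_act_mul {A B : Type*} [AddCommMonoid A] [Module k A] [Semiring B]
    [Algebra k B] {actA : H →ₗ[k] A →ₗ[k] A} {actB : H →ₗ[k] B →ₗ[k] B}
    (hR1 : ∑ i ∈ s, (Coalgebra.comul (R := k) (X i)) ⊗ₜ[k] (Y i)
      = ∑ i ∈ s, ∑ j ∈ s, ((X i) ⊗ₜ[k] (X j)) ⊗ₜ[k] (Y i * Y j))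
    (hBalg : ∀ (h : H) (b b' : B), actB h (b * b') =
      LinearMap.mul' k B
        ((TensorProduct.homTensorHomMap (RingHom.id k) B B B B)
          ((TensorProduct.map actB actB) (Coalgebra.comul (R := k) h)) (b ⊗ₜ[k] b')))
    (a : A) (b b' : B) :
    ∑ i ∈ s, actA (Y i) a ⊗ₜ[k] actB (X i) (b * b') =
      ∑ i ∈ s, ∑ j ∈ s, actA (Y i * Y j) a ⊗ₜ[k] (actB (X i) b * actB (X j) b') := by
  -- apply `(u ⊗ v) ⊗ w ↦ w • a ⊗ (u • b) (v • b')` to `hR1`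
  have := congr(lift ((mk k A B).flip.compl₁₂
    (lift ((LinearMap.mul k B).compl₁₂ (actB.flip b) (actB.flip b'))) (actA.flip a)) $hR1)
  simpa [hBalg, LinearMap.mul'_homTensorHomMap_map] using this

theorem sum_act_mul_tmul_act {A B : Type*} [Semiring A] [Algebra k A] [AddCommMonoid B]
    [Module k B] {actA : H →ₗ[k] A →ₗ[k] A} {actB : H →ₗ[k] B →ₗ[k] B}
    (hR2 : ∑ i ∈ s, (X i) ⊗ₜ[k] (Coalgebra.comul (R := k) (Y i))
      = ∑ i ∈ s, ∑ j ∈ s, ((X i) * (X j)) ⊗ₜ[k] ((Y j) ⊗ₜ[k] (Y i)))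
    (hAalg : ∀ (h : H) (a a' : A), actA h (a * a') =
      LinearMap.mul' k A
        ((TensorProduct.homTensorHomMap (RingHom.id k) A A A A)
          ((TensorProduct.map actA actA) (Coalgebra.comul (R := k) h)) (a ⊗ₜ[k] a')))
    (a a' : A) (b : B) :
    ∑ i ∈ s, actA (Y i) (a * a') ⊗ₜ[k] actB (X i) b =
      ∑ i ∈ s, ∑ j ∈ s, (actA (Y j) a * actA (Y i) a') ⊗ₜ[k] actB (X i * X j) b := by
  have := congr(lift ((mk k A B).flip.compl₁₂ (actB.flip b)
    (lift ((LinearMap.mul k A).compl₁₂ (actA.flip a) (actA.flip a')))) $hR2)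
  simpa [hAalg, LinearMap.mul'_homTensorHomMap_map] using this

variable {A B : Type*} [Semiring A] [Algebra k A] [Semiring B] [Algebra k B]
  {actA : H →ₗ[k] A →ₗ[k] A} {actB : H →ₗ[k] B →ₗ[k] B}
  {m : A ⊗[k] B →ₗ[k] A ⊗[k] B →ₗ[k] A ⊗[k] B}
theorem twisted_mul_assoc_left_expand
    (hm : ∀ (a₁ a₂ : A) (b₁ b₂ : B),
      m (a₁ ⊗ₜ[k] b₁) (a₂ ⊗ₜ[k] b₂)
        = ∑ i ∈ s, (a₁ * actA (Y i) a₂) ⊗ₜ[k] (actB (X i) b₁ * b₂))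
    (hR1 : ∑ i ∈ s, (Coalgebra.comul (R := k) (X i)) ⊗ₜ[k] (Y i)
      = ∑ i ∈ s, ∑ j ∈ s, ((X i) ⊗ₜ[k] (X j)) ⊗ₜ[k] (Y i * Y j))
    (hAmul : ∀ (h h' : H) (a : A), actA (h * h') a = actA h (actA h' a))
    (hBalg : ∀ (h : H) (b b' : B), actB h (b * b') =
      LinearMap.mul' k B
        ((TensorProduct.homTensorHomMap (RingHom.id k) B B B B)
          ((TensorProduct.map actB actB) (Coalgebra.comul (R := k) h)) (b ⊗ₜ[k] b')))
    (a₁ a₂ a₃ : A) (b₁ b₂ b₃ : B) :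
    m (m (a₁ ⊗ₜ b₁) (a₂ ⊗ₜ b₂)) (a₃ ⊗ₜ b₃) = ∑ i ∈ s, ∑ p ∈ s, ∑ q ∈ s,
      (a₁ * (actA (Y i) a₂ * actA (Y p) (actA (Y q) a₃))) ⊗ₜ[k]
        (actB (X p) (actB (X i) b₁) * (actB (X q) b₂ * b₃)) := calc
  _ = ∑ i ∈ s, map (LinearMap.mulLeft k (a₁ * actA (Y i) a₂)) (LinearMap.mulRight k b₃)
        (∑ j ∈ s, actA (Y j) a₃ ⊗ₜ[k] actB (X j) (actB (X i) b₁ * b₂)) := by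
    simp only [hm, map_sum, LinearMap.sum_apply, map_tmul, LinearMap.mulLeft_apply,
      LinearMap.mulRight_apply]
  _ = _ := by
    simp [sum_act_tmul_act_mul hR1 hBalg, map_sum, hAmul, mul_assoc]

theorem twisted_mul_assoc_right_expand
    (hm : ∀ (a₁ a₂ : A) (b₁ b₂ : B),
      m (a₁ ⊗ₜ[k] b₁) (a₂ ⊗ₜ[k] b₂)
        = ∑ i ∈ s, (a₁ * actA (Y i) a₂) ⊗ₜ[k] (actB (X i) b₁ * b₂))
    (hR2 : ∑ i ∈ s, (X i) ⊗ₜ[k] (Coalgebra.comul (R := k) (Y i))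
      = ∑ i ∈ s, ∑ j ∈ s, ((X i) * (X j)) ⊗ₜ[k] ((Y j) ⊗ₜ[k] (Y i)))
    (hAalg : ∀ (h : H) (a a' : A), actA h (a * a') =
      LinearMap.mul' k A
        ((TensorProduct.homTensorHomMap (RingHom.id k) A A A A)
          ((TensorProduct.map actA actA) (Coalgebra.comul (R := k) h)) (a ⊗ₜ[k] a')))
    (hBmul : ∀ (h h' : H) (b : B), actB (h * h') b = actB h (actB h' b))
    (a₁ a₂ a₃ : A) (b₁ b₂ b₃ : B) :
    m (a₁ ⊗ₜ b₁) (m (a₂ ⊗ₜ b₂) (a₃ ⊗ₜ b₃)) = ∑ j ∈ s, ∑ p ∈ s, ∑ i ∈ s,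
      (a₁ * (actA (Y i) a₂ * actA (Y p) (actA (Y j) a₃))) ⊗ₜ[k]
        (actB (X p) (actB (X i) b₁) * (actB (X j) b₂ * b₃)) := calc
  _ = ∑ j ∈ s, map (LinearMap.mulLeft k a₁) (LinearMap.mulRight k (actB (X j) b₂ * b₃))
        (∑ i ∈ s, actA (Y i) (a₂ * actA (Y j) a₃) ⊗ₜ[k] actB (X i) b₁) := by
    simp only [hm, map_sum, map_tmul, LinearMap.mulLeft_apply, LinearMap.mulRight_apply]
  _ = _ := by
    simp [sum_act_mul_tmul_act hR2 hAalg, map_sum, hBmul, mul_assoc]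

theorem twisted_mul_assoc_tmul
    (hm : ∀ (a₁ a₂ : A) (b₁ b₂ : B),
      m (a₁ ⊗ₜ[k] b₁) (a₂ ⊗ₜ[k] b₂)
        = ∑ i ∈ s, (a₁ * actA (Y i) a₂) ⊗ₜ[k] (actB (X i) b₁ * b₂))
    (hR1 : ∑ i ∈ s, (Coalgebra.comul (R := k) (X i)) ⊗ₜ[k] (Y i)
      = ∑ i ∈ s, ∑ j ∈ s, ((X i) ⊗ₜ[k] (X j)) ⊗ₜ[k] (Y i * Y j))
    (hR2 : ∑ i ∈ s, (X i) ⊗ₜ[k] (Coalgebra.comul (R := k) (Y i))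
      = ∑ i ∈ s, ∑ j ∈ s, ((X i) * (X j)) ⊗ₜ[k] ((Y j) ⊗ₜ[k] (Y i)))
    (hAmul : ∀ (h h' : H) (a : A), actA (h * h') a = actA h (actA h' a))
    (hAalg : ∀ (h : H) (a a' : A), actA h (a * a') =
      LinearMap.mul' k A
        ((TensorProduct.homTensorHomMap (RingHom.id k) A A A A)
          ((TensorProduct.map actA actA) (Coalgebra.comul (R := k) h)) (a ⊗ₜ[k] a')))
    (hBmul : ∀ (h h' : H) (b : B), actB (h * h') b = actB h (actB h' b))
    (hBalg : ∀ (h : H) (b b' : B), actB h (b * b') =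
      LinearMap.mul' k B
        ((TensorProduct.homTensorHomMap (RingHom.id k) B B B B)
          ((TensorProduct.map actB actB) (Coalgebra.comul (R := k) h)) (b ⊗ₜ[k] b')))
    (a₁ a₂ a₃ : A) (b₁ b₂ b₃ : B) :
    m (m (a₁ ⊗ₜ b₁) (a₂ ⊗ₜ b₂)) (a₃ ⊗ₜ b₃) = m (a₁ ⊗ₜ b₁) (m (a₂ ⊗ₜ b₂) (a₃ ⊗ₜ b₃)) := by
  rw [twisted_mul_assoc_left_expand hm hR1 hAmul hBalg,
    twisted_mul_assoc_right_expand hm hR2 hAalg hBmul]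
  calc _ = ∑ i ∈ s, ∑ q ∈ s, ∑ p ∈ s, _ := Finset.sum_congr rfl fun _ _ => Finset.sum_comm
    _ = ∑ q ∈ s, ∑ i ∈ s, ∑ p ∈ s, _ := Finset.sum_comm
    _ = _ := Finset.sum_congr rfl fun _ _ => Finset.sum_comm

theorem twisted_one_mul
    (hm : ∀ (a₁ a₂ : A) (b₁ b₂ : B),
      m (a₁ ⊗ₜ[k] b₁) (a₂ ⊗ₜ[k] b₂)
        = ∑ i ∈ s, (a₁ * actA (Y i) a₂) ⊗ₜ[k] (actB (X i) b₁ * b₂))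
    (hR3 : ∑ i ∈ s, (Coalgebra.counit (R := k) (X i)) • (Y i) = (1 : H))
    (hAone : ∀ a : A, actA 1 a = a)
    (hBunit : ∀ h : H, actB h (1 : B) = (Coalgebra.counit (R := k) h) • (1 : B))
    (x : A ⊗[k] B) : m (1 ⊗ₜ 1) x = x := by
  have hA (a : A) : ∑ i ∈ s, Coalgebra.counit (R := k) (X i) • actA (Y i) a = a := by
    simpa [hAone] using congr(actA $hR3 a)
  have : m (1 ⊗ₜ 1) = .id := ext' fun a b => by
    simp only [hm, hBunit, one_mul, smul_mul_assoc, tmul_smul, smul_tmul', ← sum_tmul, hA,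
      LinearMap.id_apply]
  exact congr($this x)

theorem twisted_mul_one
    (hm : ∀ (a₁ a₂ : A) (b₁ b₂ : B),
      m (a₁ ⊗ₜ[k] b₁) (a₂ ⊗ₜ[k] b₂)
        = ∑ i ∈ s, (a₁ * actA (Y i) a₂) ⊗ₜ[k] (actB (X i) b₁ * b₂))
    (hR4 : ∑ i ∈ s, (Coalgebra.counit (R := k) (Y i)) • (X i) = (1 : H))
    (hAunit : ∀ h : H, actA h (1 : A) = (Coalgebra.counit (R := k) h) • (1 : A))
    (hBone : ∀ b : B, actB 1 b = b)
    (x : A ⊗[k] B) : m x (1 ⊗ₜ 1) = x := by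
  have hB (b : B) : ∑ i ∈ s, Coalgebra.counit (R := k) (Y i) • actB (X i) b = b := by
    simpa [hBone] using congr(actB $hR4 b)
  have : m.flip (1 ⊗ₜ 1) = .id := ext' fun a b => by
    simp only [LinearMap.flip_apply, hm, hAunit, mul_smul_comm, mul_one, smul_tmul, ← tmul_sum,
      hB, LinearMap.id_apply]
  exact congr($this x)

end TwistedMul

/-- for a bialgebra H over k with R = Σᵢ Xᵢ ⊗ Yᵢ ∈ H ⊗ H satisfying
(Δ⊗id)R = R₁₃R₂₃, (id⊗Δ)R = R₁₃R₁₂, (ε⊗id)R = 1 = (id⊗ε)R, and H-module algebras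
A and B, the twisted multiplication on A ⊗ B given by
(a₁ ⊗ b₁)·(a₂ ⊗ b₂) = Σᵢ a₁(Yᵢ·a₂) ⊗ (Xᵢ·b₁)b₂ is associative with two-sided unit
1_A ⊗ 1_B. -/
theorem twisted_tensor_product_associative
    {k : Type*} [CommRing k]
    {H : Type*} [Ring H] [Bialgebra k H]
    {A : Type*} [Ring A] [Algebra k A]
    {B : Type*} [Ring B] [Algebra k B]
    {ι : Type*} (s : Finset ι) (X Y : ι → H)
    -- (Δ ⊗ id)(R) = R₁₃R₂₃   (in (H ⊗ H) ⊗ H)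
    (hR1 : ∑ i ∈ s, (Coalgebra.comul (R := k) (X i)) ⊗ₜ[k] (Y i)
      = ∑ i ∈ s, ∑ j ∈ s, ((X i) ⊗ₜ[k] (X j)) ⊗ₜ[k] (Y i * Y j))
    -- (id ⊗ Δ)(R) = R₁₃R₁₂   (in H ⊗ (H ⊗ H))
    (hR2 : ∑ i ∈ s, (X i) ⊗ₜ[k] (Coalgebra.comul (R := k) (Y i))
      = ∑ i ∈ s, ∑ j ∈ s, ((X i) * (X j)) ⊗ₜ[k] ((Y j) ⊗ₜ[k] (Y i)))
    -- (ε ⊗ id)(R) = 1 = (id ⊗ ε)(R)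
    (hR3 : ∑ i ∈ s, (Coalgebra.counit (R := k) (X i)) • (Y i) = (1 : H))
    (hR4 : ∑ i ∈ s, (Coalgebra.counit (R := k) (Y i)) • (X i) = (1 : H))
    -- A is a left H-module algebra via actA
    (actA : H →ₗ[k] A →ₗ[k] A)
    (hAone : ∀ a : A, actA 1 a = a)
    (hAmul : ∀ (h h' : H) (a : A), actA (h * h') a = actA h (actA h' a))
    (hAalg : ∀ (h : H) (a a' : A), actA h (a * a') =
      LinearMap.mul' k A
        ((TensorProduct.homTensorHomMap (RingHom.id k) A A A A)
          ((TensorProduct.map actA actA) (Coalgebra.comul (R := k) h)) (a ⊗ₜ[k] a')))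
    (hAunit : ∀ h : H, actA h (1 : A) = (Coalgebra.counit (R := k) h) • (1 : A))
    -- B is a left H-module algebra via actB
    (actB : H →ₗ[k] B →ₗ[k] B)
    (hBone : ∀ b : B, actB 1 b = b)
    (hBmul : ∀ (h h' : H) (b : B), actB (h * h') b = actB h (actB h' b))
    (hBalg : ∀ (h : H) (b b' : B), actB h (b * b') =
      LinearMap.mul' k B
        ((TensorProduct.homTensorHomMap (RingHom.id k) B B B B)
          ((TensorProduct.map actB actB) (Coalgebra.comul (R := k) h)) (b ⊗ₜ[k] b')))
    (hBunit : ∀ h : H, actB h (1 : B) = (Coalgebra.counit (R := k) h) • (1 : B))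
    -- the twisted multiplication on A ⊗ B
    (m : A ⊗[k] B →ₗ[k] A ⊗[k] B →ₗ[k] A ⊗[k] B)
    (hm : ∀ (a₁ a₂ : A) (b₁ b₂ : B),
      m (a₁ ⊗ₜ[k] b₁) (a₂ ⊗ₜ[k] b₂)
        = ∑ i ∈ s, (a₁ * actA (Y i) a₂) ⊗ₜ[k] (actB (X i) b₁ * b₂)) :
    (∀ x y z : A ⊗[k] B, m (m x y) z = m x (m y z)) ∧
    (∀ x : A ⊗[k] B, m ((1 : A) ⊗ₜ[k] (1 : B)) x = x ∧ m x ((1 : A) ⊗ₜ[k] (1 : B)) = x) :=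
  ⟨bilin_assoc_of_tmul m (twisted_mul_assoc_tmul hm hR1 hR2 hAmul hAalg hBmul hBalg),
    fun x => ⟨twisted_one_mul hm hR3 hAone hBunit x, twisted_mul_one hm hR4 hAunit hBone x⟩⟩
end

section
/- The binary operation on Y × Z defined by (y₁, z₁) * (y₂, z₂) = ( y₁ · (μ_Z(z₁) ▷ y₂), (z₁ ◁ μ_Y(y₂)) · z₂ ) is associative. -/
/-!
Both components reduce to one identity each. In the first, `μ_Z(z₁ ◁ μ_Y(y₂)) = μ_Z(z₁)^{μ_Y(y₂)}`
is exactly the twist appearing when `μ_Z(z₁) ▷ -` is applied to `y₂ · (μ_Z(z₂) ▷ y₃)`; dually, in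
the second, `μ_Y(μ_Z(z₂) ▷ y₃) = μ_Z(z₂)[μ_Y(y₃)]` is the twist appearing when `- ◁ μ_Y(y₃)` is
applied to `(z₁ ◁ μ_Y(y₂)) · z₂`.
-/

theorem act_mul_act_eq {D Y : Type*} [Group D] [Mul Y] {Gs : Subgroup D} {b : D → D → D}
    {μY : Y → D} {act : D → Y → Y}
    (hact_mul : ∀ u ∈ Gs, ∀ v ∈ Gs, ∀ y, act (u * v) y = act u (act v y))
    (hact_tw : ∀ u ∈ Gs, ∀ y₁ y₂ : Y, act u (y₁ * y₂) = act u y₁ * act (b u (μY y₁)) y₂)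
    {u v : D} {y : Y} (hu : u ∈ Gs) (hv : v ∈ Gs) (hb : b u (μY y) ∈ Gs) (y' : Y) :
    act u (y * act v y') = act u y * act (b u (μY y) * v) y' := by
  rw [hact_tw u hu, hact_mul _ hb _ hv]

theorem ract_mul_ract_eq {D Z : Type*} [Group D] [Mul Z] {G : Subgroup D} {a : D → D → D}
    {μZ : Z → D} {ract : Z → D → Z}
    (hract_mul : ∀ g ∈ G, ∀ h ∈ G, ∀ z, ract z (g * h) = ract (ract z g) h)
    (hract_tw : ∀ g ∈ G, ∀ z₁ z₂ : Z, ract (z₁ * z₂) g = ract z₁ (a (μZ z₂) g) * ract z₂ g)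
    {g h : D} {z' : Z} (hg : g ∈ G) (hh : h ∈ G) (ha : a (μZ z') h ∈ G) (z : Z) :
    ract (ract z g * z') h = ract z (g * a (μZ z') h) * ract z' h := by
  rw [hract_tw h hh, hract_mul g hg _ ha]

theorem twisted_product_associative_general
    {D : Type*} [Group D] (G Gs : Subgroup D)
    -- a u g = u[g] ∈ G,  b u g = u^g ∈ G*, defined by u·g = u[g]·u^g
    (a b : D → D → D)
    (hab : ∀ u ∈ Gs, ∀ g ∈ G, a u g ∈ G ∧ b u g ∈ Gs ∧ u * g = a u g * b u g)
    {Y Z : Type*} [Group Y] [Group Z]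
    (μY : Y →* D) (hμY : ∀ y, μY y ∈ G)
    (μZ : Z →* D) (hμZ : ∀ z, μZ z ∈ Gs)
    -- left action ▷ of G* on Y
    (act : D → Y → Y)
    (hact_mul : ∀ u ∈ Gs, ∀ v ∈ Gs, ∀ y, act (u * v) y = act u (act v y))
    (hact_mom : ∀ u ∈ Gs, ∀ y, μY (act u y) = a u (μY y))
    (hact_tw : ∀ u ∈ Gs, ∀ y₁ y₂ : Y,
      act u (y₁ * y₂) = act u y₁ * act (b u (μY y₁)) y₂)
    -- right action ◁ of G on Z
    (ract : Z → D → Z)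
    (hract_mul : ∀ g ∈ G, ∀ h ∈ G, ∀ z, ract z (g * h) = ract (ract z g) h)
    (hract_mom : ∀ g ∈ G, ∀ z, μZ (ract z g) = b (μZ z) g)
    (hract_tw : ∀ g ∈ G, ∀ z₁ z₂ : Z,
      ract (z₁ * z₂) g = ract z₁ (a (μZ z₂) g) * ract z₂ g)
    -- the binary operation on Y × Z
    (op : Y × Z → Y × Z → Y × Z)
    (hop : ∀ p q, op p q = (p.1 * act (μZ p.2) q.1, ract p.2 (μY q.1) * q.2)) :
    ∀ p q r : Y × Z, op (op p q) r = op p (op q r) := by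
  rintro ⟨y₁, z₁⟩ ⟨y₂, z₂⟩ ⟨y₃, z₃⟩
  simp only [hop, Prod.mk.injEq]
  constructor
  · rw [map_mul, hract_mom _ (hμY y₂), mul_assoc,
      act_mul_act_eq hact_mul hact_tw (hμZ z₁) (hμZ z₂) (hab _ (hμZ z₁) _ (hμY y₂)).2.1]
  · rw [ract_mul_ract_eq hract_mul hract_tw (hμY y₂) (hμY y₃) (hab _ (hμZ z₂) _ (hμY y₃)).1,
      map_mul, hact_mom _ (hμZ z₂), mul_assoc]

/-- with twisted-multiplicative actions ▷ of G* on Y and ◁ of G on Z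
over moment homomorphisms μ_Y : Y → G, μ_Z : Z → G*, the binary operation
(y₁, z₁) * (y₂, z₂) = (y₁·(μ_Z(z₁) ▷ y₂), (z₁ ◁ μ_Y(y₂))·z₂) on Y × Z is associative. -/
theorem twisted_product_associative
    {D : Type*} [Group D] (G Gs : Subgroup D)
    (hex1 : ∀ d : D, ∃ g ∈ G, ∃ u ∈ Gs, d = g * u)
    (huniq1 : ∀ g₁ g₂ u₁ u₂ : D, g₁ ∈ G → g₂ ∈ G → u₁ ∈ Gs → u₂ ∈ Gs →
      g₁ * u₁ = g₂ * u₂ → g₁ = g₂ ∧ u₁ = u₂)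
    (hex2 : ∀ d : D, ∃ u ∈ Gs, ∃ g ∈ G, d = u * g)
    (huniq2 : ∀ u₁ u₂ g₁ g₂ : D, u₁ ∈ Gs → u₂ ∈ Gs → g₁ ∈ G → g₂ ∈ G →
      u₁ * g₁ = u₂ * g₂ → u₁ = u₂ ∧ g₁ = g₂)
    -- a u g = u[g] ∈ G,  b u g = u^g ∈ G*, defined by u·g = u[g]·u^g
    (a b : D → D → D)
    (hab : ∀ u ∈ Gs, ∀ g ∈ G, a u g ∈ G ∧ b u g ∈ Gs ∧ u * g = a u g * b u g)
    {Y Z : Type*} [Group Y] [Group Z]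
    (μY : Y →* D) (hμY : ∀ y, μY y ∈ G)
    (μZ : Z →* D) (hμZ : ∀ z, μZ z ∈ Gs)
    -- left action ▷ of G* on Y
    (act : D → Y → Y)
    (hact_one : ∀ y, act 1 y = y)
    (hact_mul : ∀ u ∈ Gs, ∀ v ∈ Gs, ∀ y, act (u * v) y = act u (act v y))
    (hact_mom : ∀ u ∈ Gs, ∀ y, μY (act u y) = a u (μY y))
    (hact_tw : ∀ u ∈ Gs, ∀ y₁ y₂ : Y,
      act u (y₁ * y₂) = act u y₁ * act (b u (μY y₁)) y₂)
    -- right action ◁ of G on Z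
    (ract : Z → D → Z)
    (hract_one : ∀ z, ract z 1 = z)
    (hract_mul : ∀ g ∈ G, ∀ h ∈ G, ∀ z, ract z (g * h) = ract (ract z g) h)
    (hract_mom : ∀ g ∈ G, ∀ z, μZ (ract z g) = b (μZ z) g)
    (hract_tw : ∀ g ∈ G, ∀ z₁ z₂ : Z,
      ract (z₁ * z₂) g = ract z₁ (a (μZ z₂) g) * ract z₂ g)
    -- the binary operation on Y × Z
    (op : Y × Z → Y × Z → Y × Z)
    (hop : ∀ p q, op p q = (p.1 * act (μZ p.2) q.1, ract p.2 (μY q.1) * q.2)) :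
    ∀ p q r : Y × Z, op (op p q) r = op p (op q r) :=
  twisted_product_associative_general G Gs a b hab μY hμY μZ hμZ act hact_mul hact_mom hact_tw ract
    hract_mul hract_mom hract_tw op hop
end

section
/- The intersection of the images B̄ and B̿₋ in D = G × T equals the diagonal copy of the 2-torsion of T: B̄ ∩ B̿₋ = {(t, t) : t ∈ T, t² = e}. -/
namespace Subgroup

variable {G : Type*} [Group G] {T N Nm B Bm : Subgroup G}

/-- The common element `h * n = m * h'` lies in `B ⊓ Bm = T`, so both unipotent factors lie in
`T` and are therefore trivial. -/
theorem eq_one_of_mul_eq_mul (hTN : T ⊓ N = ⊥) (hTNm : T ⊓ Nm = ⊥) (hNB : N ≤ B)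
    (hNmBm : Nm ≤ Bm) (hBBm : B ⊓ Bm = T) {h h' n m : G} (hh : h ∈ T) (hh' : h' ∈ T)
    (hn : n ∈ N) (hm : m ∈ Nm) (heq : h * n = m * h') : n = 1 ∧ m = 1 := by
  have hTB : T ≤ B := hBBm ▸ inf_le_left
  have hTBm : T ≤ Bm := hBBm ▸ inf_le_right
  have hx : h * n ∈ T := by
    rw [← hBBm]
    refine ⟨mul_mem (hTB hh) (hNB hn), ?_⟩
    rw [heq]
    exact mul_mem (hNmBm hm) (hTBm hh')
  have hnT : n ∈ T := (mul_mem_cancel_left hh).mp hx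
  have hmT : m ∈ T := (mul_mem_cancel_right hh').mp (heq ▸ hx)
  exact ⟨disjoint_def.mp (disjoint_iff.mpr hTN) hnT hn,
    disjoint_def.mp (disjoint_iff.mpr hTNm) hmT hm⟩

end Subgroup

/-- in D = G × T, the images B̄ = {(hn, h) : h ∈ T, n ∈ N} and
B̿₋ = {(mh, h⁻¹) : m ∈ N₋, h ∈ T} intersect exactly in the diagonal copy of the
2-torsion of T: B̄ ∩ B̿₋ = {(t,t) : t ∈ T, t² = e}. -/
theorem Bbar_inter_Bbbar
    {G : Type*} [Group G] (T N Nm B Bm : Subgroup G)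
    (hTN : T ⊓ N = ⊥) (hTNm : T ⊓ Nm = ⊥)
    (hB : (B : Set G) = {x | ∃ t ∈ T, ∃ n ∈ N, x = t * n})
    (hBm : (Bm : Set G) = {x | ∃ m ∈ Nm, ∃ t ∈ T, x = m * t})
    (hBBm : B ⊓ Bm = T)
    (Bbar Bmbar : Set (G × G))
    (hBbar : Bbar = {p | ∃ h ∈ T, ∃ n ∈ N, p = (h * n, h)})
    (hBmbar : Bmbar = {p | ∃ m ∈ Nm, ∃ h ∈ T, p = (m * h, h⁻¹)}) :
    Bbar ∩ Bmbar = {p | ∃ t ∈ T, t * t = 1 ∧ p = (t, t)} := by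
  have hNB : N ≤ B := fun n hn => by
    rw [← SetLike.mem_coe, hB]
    exact ⟨1, T.one_mem, n, hn, (one_mul n).symm⟩
  have hNmBm : Nm ≤ Bm := fun m hm => by
    rw [← SetLike.mem_coe, hBm]
    exact ⟨m, hm, 1, T.one_mem, (mul_one m).symm⟩
  subst hBbar hBmbar
  ext p
  constructor
  · rintro ⟨⟨h, hh, n, hn, rfl⟩, ⟨m, hm, h', hh', heq⟩⟩
    obtain ⟨hfst, hsnd⟩ := Prod.ext_iff.mp heq
    obtain ⟨rfl, rfl⟩ := Subgroup.eq_one_of_mul_eq_mul hTN hTNm hNB hNmBm hBBm hh hh' hn hm hfst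
    simp only [mul_one, one_mul] at hfst hsnd ⊢
    subst hfst
    exact ⟨h, hh, mul_eq_one_iff_eq_inv.mpr hsnd, rfl⟩
  · rintro ⟨t, ht, htt, rfl⟩
    refine ⟨⟨t, ht, 1, N.one_mem, by rw [mul_one]⟩, ⟨1, Nm.one_mem, t, ht, ?_⟩⟩
    rw [one_mul, inv_eq_of_mul_eq_one_right htt]
end
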